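/- (Boundary squeeze identity.) Let n ≥ 2 and q ≥ 1, let Ω ⊂ H ∩ B₁ be open, and let v = (v¹,…,v^q) : closure(Ω) → ℝ^q be C¹ up to the boundary on closure(Ω), with v = 0 at every point of closure(Ω) ∩ ∂H and with D_j v^α = 0 at every point of closure(Ω) ∩ ∂H for every j ≥ 2 and every α (the tangential derivatives vanish along ∂H). Assume the interior squeeze identity: for every C¹ vector field ψ = (ψ¹,…,ψⁿ) : ℝⁿ → ℝⁿ such that spt ψ ∩ closure(Ω) is a compact subset of Ω, one has ∫_Ω Σ_{α=1}^q Σ_{i,j=1}^n (|Dv|² δ_{ij} − 2 D_i v^α D_j v^α) D_i ψ^j = 0. Then for every C¹ vector field ψ : ℝⁿ → ℝⁿ whose support is compact, contained in B₁, satisfies spt ψ ∩ closure(Ω) ⊂ Ω ∪ ∂H, and whose normal component satisfies ψ¹ = 0 on ∂H, the same identity ∫_Ω Σ_{α=1}^q Σ_{i,j=1}^n (|Dv|² δ_{ij} − 2 D_i v^α D_j v^α) D_i ψ^j = 0 holds. -/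

import Mathlib

open MeasureTheory Metric Set

set_option maxHeartbeats 1000000


noncomputable def ee (n : ℕ) (i : Fin n) : EuclideanSpace ℝ (Fin n) :=
  EuclideanSpace.single i 1

noncomputable def AA (n q : ℕ)
    (Dv : EuclideanSpace ℝ (Fin n) → Fin q → (EuclideanSpace ℝ (Fin n) →L[ℝ] ℝ))
    (x : EuclideanSpace ℝ (Fin n)) (α : Fin q) (i j : Fin n) : ℝ :=
  (∑ β, ∑ l, (Dv x β (ee n l)) ^ 2) * (if i = j then (1 : ℝ) else 0)
    - 2 * Dv x α (ee n i) * Dv x α (ee n j)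

noncomputable def FF (n q : ℕ)
    (Dv : EuclideanSpace ℝ (Fin n) → Fin q → (EuclideanSpace ℝ (Fin n) →L[ℝ] ℝ))
    (φ : EuclideanSpace ℝ (Fin n) → Fin n → ℝ) (x : EuclideanSpace ℝ (Fin n)) : ℝ :=
  ∑ α, ∑ i, ∑ j, AA n q Dv x α i j * fderiv ℝ (fun y => φ y j) x (ee n i)

lemma sum_bound {m : ℕ} (g : Fin m → ℝ) {B : ℝ} (h : ∀ i, |g i| ≤ B) :
    |∑ i, g i| ≤ (m : ℝ) * B := by
  calc |∑ i, g i| ≤ ∑ i, |g i| := Finset.abs_sum_le_sum_abs _ _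
    _ ≤ ∑ _i : Fin m, B := Finset.sum_le_sum fun i _ => h i
    _ = (m : ℝ) * B := by simp [Finset.sum_const, Finset.card_univ, nsmul_eq_mul]

lemma st_deriv_zero : ∀ t : ℝ, t ∉ Set.Icc (0:ℝ) 1 → deriv Real.smoothTransition t = 0 := by
  intro t ht
  rcases lt_or_ge t 0 with h | h
  · have : Real.smoothTransition =ᶠ[nhds t] fun _ => 0 := by
      filter_upwards [Iio_mem_nhds h] with s hs
      exact Real.smoothTransition.zero_of_nonpos (le_of_lt hs)
    rw [this.deriv_eq]; exact deriv_const t 0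
  · have h1 : 1 < t := by
      rcases lt_or_ge t 1 with h1 | h1
      · exact absurd ⟨h, le_of_lt h1⟩ ht
      · rcases eq_or_lt_of_le h1 with rfl | h2
        · exact absurd ⟨h, le_refl _⟩ ht
        · exact h2
    have : Real.smoothTransition =ᶠ[nhds t] fun _ => 1 := by
      filter_upwards [Ioi_mem_nhds h1] with s hs
      exact Real.smoothTransition.one_of_one_le (le_of_lt hs)
    rw [this.deriv_eq]; exact deriv_const t 1

lemma st_deriv_bound : ∃ C, 0 ≤ C ∧ ∀ t, |deriv Real.smoothTransition t| ≤ C := by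
  have hd : Continuous (deriv Real.smoothTransition) :=
    (Real.smoothTransition.contDiff (n := 1)).continuous_deriv le_rfl
  have hcs : HasCompactSupport (deriv Real.smoothTransition) :=
    HasCompactSupport.intro isCompact_Icc st_deriv_zero
  obtain ⟨C, hC⟩ := (hd.norm).bounded_above_of_compact_support (hcs.norm)
  exact ⟨max C 0, le_max_right _ _, fun t =>
    le_trans (by simpa [Real.norm_eq_abs] using hC t) (le_max_left _ _)⟩

lemma volume_box (n : ℕ) (a b : Fin n → ℝ) :
    volume {x : EuclideanSpace ℝ (Fin n) | ∀ j, x j ∈ Set.Ioo (a j) (b j)} =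
      ∏ j, ENNReal.ofReal (b j - a j) := by
  have hmp := EuclideanSpace.volume_preserving_symm_measurableEquiv_toLp (Fin n)
  have hset : {x : EuclideanSpace ℝ (Fin n) | ∀ j, x j ∈ Set.Ioo (a j) (b j)} =
      (MeasurableEquiv.toLp 2 (Fin n → ℝ)).symm ⁻¹'
        (Set.pi Set.univ fun j => Set.Ioo (a j) (b j)) := by
    ext x
    simp [Set.mem_pi]
  rw [hset, hmp.measure_preimage
    (MeasurableSet.univ_pi fun j => measurableSet_Ioo).nullMeasurableSet, Real.volume_pi_Ioo]

lemma coord_le_norm {n : ℕ} (x : EuclideanSpace ℝ (Fin n)) (j : Fin n) : |x j| ≤ ‖x‖ := by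
  rw [EuclideanSpace.norm_eq, ← Real.sqrt_sq_eq_abs]
  apply Real.sqrt_le_sqrt
  have := Finset.single_le_sum (f := fun i => ‖x i‖ ^ 2) (fun i _ => sq_nonneg _)
    (Finset.mem_univ j)
  simpa [Real.norm_eq_abs, sq_abs] using this

lemma exists_AA_bound (n q : ℕ)
    (Dv : EuclideanSpace ℝ (Fin n) → Fin q → (EuclideanSpace ℝ (Fin n) →L[ℝ] ℝ))
    (K : Set (EuclideanSpace ℝ (Fin n))) (hK : IsCompact K) (hDv : ContinuousOn Dv K) :
    ∃ M1 M2 : ℝ, 0 ≤ M1 ∧ 0 ≤ M2 ∧ (∀ x ∈ K, ∀ α i, |Dv x α (ee n i)| ≤ M1) ∧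
      (∀ x ∈ K, ∀ α i j, |AA n q Dv x α i j| ≤ M2) ∧
      M2 = (q : ℝ) * ((n : ℝ) * M1 ^ 2) + 2 * (M1 * M1) := by
  obtain ⟨C, hC⟩ := hK.exists_bound_of_continuousOn hDv
  set M1 := max C 0 with hM1def
  have hM1n : 0 ≤ M1 := le_max_right _ _
  have hM1 : ∀ x ∈ K, ∀ α i, |Dv x α (ee n i)| ≤ M1 := by
    intro x hx α i
    calc |Dv x α (ee n i)| ≤ ‖Dv x α‖ * ‖ee n i‖ := (Dv x α).le_opNorm _
      _ ≤ ‖Dv x‖ * 1 := by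
          apply mul_le_mul (norm_le_pi_norm (Dv x) α) ?_ (norm_nonneg _) (norm_nonneg _)
          simp [ee, EuclideanSpace.norm_single]
      _ = ‖Dv x‖ := mul_one _
      _ ≤ M1 := le_trans (hC x hx) (le_max_left _ _)
  refine ⟨M1, (q : ℝ) * ((n : ℝ) * M1 ^ 2) + 2 * (M1 * M1), hM1n, by positivity, hM1,
    ?_, rfl⟩
  intro x hx α i j
  have hS0 : (0:ℝ) ≤ ∑ β, ∑ l, (Dv x β (ee n l)) ^ 2 :=
    Finset.sum_nonneg fun β _ => Finset.sum_nonneg fun l _ => sq_nonneg _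
  have hS : ∑ β, ∑ l, (Dv x β (ee n l)) ^ 2 ≤ (q : ℝ) * ((n : ℝ) * M1 ^ 2) := by
    calc ∑ β, ∑ l, (Dv x β (ee n l)) ^ 2 ≤ ∑ _β : Fin q, ((n:ℝ) * M1 ^ 2) := by
          apply Finset.sum_le_sum
          intro β _
          calc ∑ l, (Dv x β (ee n l)) ^ 2 ≤ ∑ _l : Fin n, M1 ^ 2 := by
                apply Finset.sum_le_sum
                intro l _
                have h := hM1 x hx β l
                have h2 := abs_le.mp h
                nlinarith [h2.1, h2.2]
            _ = (n:ℝ) * M1 ^ 2 := by simp [Finset.sum_const, Finset.card_univ, nsmul_eq_mul]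
      _ = (q:ℝ) * ((n:ℝ) * M1 ^ 2) := by simp [Finset.sum_const, Finset.card_univ, nsmul_eq_mul]
  have h1 := hM1 x hx α i
  have h2 := hM1 x hx α j
  unfold AA
  have hite : |(if i = j then (1:ℝ) else 0)| ≤ 1 := by split_ifs <;> simp
  calc |(∑ β, ∑ l, (Dv x β (ee n l)) ^ 2) * (if i = j then (1:ℝ) else 0)
        - 2 * Dv x α (ee n i) * Dv x α (ee n j)|
      ≤ |(∑ β, ∑ l, (Dv x β (ee n l)) ^ 2) * (if i = j then (1:ℝ) else 0)|
        + |2 * Dv x α (ee n i) * Dv x α (ee n j)| := abs_sub _ _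
    _ ≤ (q : ℝ) * ((n : ℝ) * M1 ^ 2) + 2 * (M1 * M1) := by
        apply add_le_add
        · rw [abs_mul]
          calc |∑ β, ∑ l, (Dv x β (ee n l)) ^ 2| * |(if i = j then (1:ℝ) else 0)|
              ≤ |∑ β, ∑ l, (Dv x β (ee n l)) ^ 2| * 1 :=
                mul_le_mul_of_nonneg_left hite (abs_nonneg _)
            _ = |∑ β, ∑ l, (Dv x β (ee n l)) ^ 2| := mul_one _
            _ = ∑ β, ∑ l, (Dv x β (ee n l)) ^ 2 := abs_of_nonneg hS0
            _ ≤ _ := hS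
        · rw [abs_mul, abs_mul]
          simp only [abs_two]
          calc 2 * |Dv x α (ee n i)| * |Dv x α (ee n j)|
              ≤ 2 * M1 * M1 := by
                apply mul_le_mul _ h2 (abs_nonneg _) (by positivity)
                exact mul_le_mul_of_nonneg_left h1 (by norm_num)
            _ = 2 * (M1 * M1) := by ring

lemma exists_fderiv_bound (n m : ℕ) (φ : EuclideanSpace ℝ (Fin n) → Fin m → ℝ)
    (hφ : ContDiff ℝ 1 φ) (hφc : HasCompactSupport φ) :
    ∃ C, 0 ≤ C ∧ ∀ (j : Fin m) (x), ‖fderiv ℝ (fun y => φ y j) x‖ ≤ C := by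
  have h : ∀ j : Fin m, ∃ C, 0 ≤ C ∧ ∀ x, ‖fderiv ℝ (fun y => φ y j) x‖ ≤ C := by
    intro j
    have hcs : HasCompactSupport (fun y => φ y j) := by
      apply HasCompactSupport.mono hφc
      intro y hy hcon
      exact hy (by simp [hcon])
    obtain ⟨C, hC⟩ :=
      ((contDiff_pi.mp hφ j).continuous_fderiv one_ne_zero).norm.bounded_above_of_compact_support
        (hcs.fderiv ℝ).norm
    exact ⟨max C 0, le_max_right _ _, fun x =>
      le_trans (by simpa using hC x) (le_max_left _ _)⟩
  choose Cf h0 hCf using h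
  refine ⟨∑ j, Cf j, Finset.sum_nonneg fun j _ => h0 j, fun j x => ?_⟩
  exact le_trans (hCf j x)
    (Finset.single_le_sum (f := Cf) (fun i _ => h0 i) (Finset.mem_univ j))

lemma exists_val_bound (n m : ℕ) (φ : EuclideanSpace ℝ (Fin n) → Fin m → ℝ)
    (hφ : ContDiff ℝ 1 φ) (hφc : HasCompactSupport φ) :
    ∃ C, 0 ≤ C ∧ ∀ (x) (j : Fin m), |φ x j| ≤ C := by
  obtain ⟨C, hC⟩ := hφ.continuous.norm.bounded_above_of_compact_support hφc.norm
  refine ⟨max C 0, le_max_right _ _, fun x j => ?_⟩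
  calc |φ x j| = ‖φ x j‖ := (Real.norm_eq_abs _).symm
    _ ≤ ‖φ x‖ := norm_le_pi_norm (φ x) j
    _ ≤ max C 0 := le_trans (by simpa using hC x) (le_max_left _ _)

lemma exists_tangential_bound (n q : ℕ) (i0 : Fin n)
    (Dv : EuclideanSpace ℝ (Fin n) → Fin q → (EuclideanSpace ℝ (Fin n) →L[ℝ] ℝ))
    (K : Set (EuclideanSpace ℝ (Fin n))) (hK : IsCompact K) (hKc : IsClosed K)
    (hDv : ContinuousOn Dv K)
    (hpos : ∀ x ∈ K, 0 ≤ x i0)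
    (hbdry : ∀ x ∈ K, x i0 = 0 → ∀ α, ∀ j, j ≠ i0 → Dv x α (ee n j) = 0)
    (δ : ℝ) (hδ : 0 < δ) :
    ∃ t > 0, ∀ x ∈ K, x i0 ≤ t → ∀ α, ∀ j, j ≠ i0 → |Dv x α (ee n j)| ≤ δ := by
  classical
  set C : Set (EuclideanSpace ℝ (Fin n)) :=
    ⋃ α : Fin q, ⋃ j : Fin n, if j = i0 then ∅
      else (K ∩ (fun x => |Dv x α (ee n j)|) ⁻¹' Set.Ici δ) with hCdef
  have hCclosed : IsClosed C := by
    apply isClosed_iUnion_of_finite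
    intro α
    apply isClosed_iUnion_of_finite
    intro j
    by_cases hj : j = i0
    · simp [hj]
    · simp only [hj, if_false]
      refine ContinuousOn.preimage_isClosed_of_isClosed ?_ hKc isClosed_Ici
      exact (((ContinuousLinearMap.apply ℝ ℝ (ee n j)).continuous.comp_continuousOn
        ((continuous_apply α).comp_continuousOn hDv))).abs
  have hCK : C ⊆ K := by
    intro x hx
    simp only [hCdef, Set.mem_iUnion] at hx
    obtain ⟨α, j, hx⟩ := hx
    by_cases hj : j = i0
    · simp [hj] at hx
    · simp only [hj, if_false] at hx; exact hx.1
  have hCcompact : IsCompact C := hK.of_isClosed_subset hCclosed hCK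
  rcases Set.eq_empty_or_nonempty C with hCe | hCne
  · refine ⟨1, one_pos, fun x hx hxt α j hj => ?_⟩
    by_contra hcon
    have : x ∈ C := by
      simp only [hCdef, Set.mem_iUnion]
      exact ⟨α, j, by simp [hj, hx, Set.mem_preimage, le_of_lt (lt_of_not_ge hcon)]⟩
    simp [hCe] at this
  · obtain ⟨x₀, hx₀C, hx₀min⟩ := hCcompact.exists_isMinOn hCne
      ((EuclideanSpace.proj (𝕜 := ℝ) i0).continuous.continuousOn)
    have hx₀K := hCK hx₀C
    have hm : 0 < x₀ i0 := by
      rcases (hpos x₀ hx₀K).lt_or_eq with h | h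
      · exact h
      · exfalso
        simp only [hCdef, Set.mem_iUnion] at hx₀C
        obtain ⟨α, j, hx⟩ := hx₀C
        by_cases hj : j = i0
        · simp [hj] at hx
        · simp only [hj, if_false] at hx
          have hz := hbdry x₀ hx₀K h.symm α j hj
          have h2 := hx.2
          rw [Set.mem_preimage, hz] at h2
          simp at h2
          linarith
    refine ⟨x₀ i0 / 2, by linarith, fun x hx hxt α j hj => ?_⟩
    by_contra hcon
    have hxC : x ∈ C := by
      simp only [hCdef, Set.mem_iUnion]
      exact ⟨α, j, by simp [hj, hx, Set.mem_preimage, le_of_lt (lt_of_not_ge hcon)]⟩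
    have hle : x₀ i0 ≤ x i0 := hx₀min hxC
    linarith

lemma FF_cutoff (n q : ℕ)
    (Dv : EuclideanSpace ℝ (Fin n) → Fin q → (EuclideanSpace ℝ (Fin n) →L[ℝ] ℝ))
    (ψ : EuclideanSpace ℝ (Fin n) → Fin n → ℝ) (hψ : ContDiff ℝ 1 ψ)
    (i0 : Fin n) (γ γ' : ℝ → ℝ) (hγ : ∀ s, HasDerivAt γ (γ' s) s)
    (x : EuclideanSpace ℝ (Fin n)) :
    FF n q Dv (fun y j => γ (y i0) * ψ y j) x
      = γ (x i0) * FF n q Dv ψ x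
        + γ' (x i0) * ∑ α, ∑ j, AA n q Dv x α i0 j * ψ x j := by
  have hfd : ∀ j, fderiv ℝ (fun y => γ (y i0) * ψ y j) x =
      γ (x i0) • fderiv ℝ (fun y => ψ y j) x
        + (ψ x j) • (γ' (x i0) • (EuclideanSpace.proj (𝕜 := ℝ) i0 :
            EuclideanSpace ℝ (Fin n) →L[ℝ] ℝ)) := by
    intro j
    have h1 : HasFDerivAt (fun y : EuclideanSpace ℝ (Fin n) => γ (y i0))
        (γ' (x i0) • (EuclideanSpace.proj (𝕜 := ℝ) i0 :
          EuclideanSpace ℝ (Fin n) →L[ℝ] ℝ)) x :=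
      (hγ (x i0)).comp_hasFDerivAt x (EuclideanSpace.proj (𝕜 := ℝ) i0).hasFDerivAt
    have h2 : HasFDerivAt (fun y => ψ y j) (fderiv ℝ (fun y => ψ y j) x) x :=
      ((contDiff_pi.mp hψ j).differentiable one_ne_zero x).hasFDerivAt
    exact (h1.mul h2).fderiv
  have hP : ∀ i, (EuclideanSpace.proj (𝕜 := ℝ) i0 : EuclideanSpace ℝ (Fin n) →L[ℝ] ℝ)
      (ee n i) = if i0 = i then 1 else 0 := by
    intro i; simp [ee, EuclideanSpace.single_apply]
  unfold FF
  calc ∑ α, ∑ i, ∑ j, AA n q Dv x α i j *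
        fderiv ℝ (fun y => (fun y j => γ (y i0) * ψ y j) y j) x (ee n i)
      = ∑ α, ∑ i, ∑ j,
          (γ (x i0) * (AA n q Dv x α i j * fderiv ℝ (fun y => ψ y j) x (ee n i))
            + (if i0 = i then AA n q Dv x α i j * ψ x j * γ' (x i0) else 0)) := by
        refine Finset.sum_congr rfl fun α _ => Finset.sum_congr rfl fun i _ =>
          Finset.sum_congr rfl fun j _ => ?_
        rw [hfd j]
        simp only [ContinuousLinearMap.add_apply, ContinuousLinearMap.coe_smul',
          Pi.smul_apply, hP i, smul_eq_mul]
        split_ifs <;> ring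
    _ = γ (x i0) * FF n q Dv ψ x
        + γ' (x i0) * ∑ α, ∑ j, AA n q Dv x α i0 j * ψ x j := by
        simp only [Finset.sum_add_distrib]
        congr 1
        · unfold FF
          simp only [Finset.mul_sum]
        · rw [Finset.mul_sum]
          refine Finset.sum_congr rfl fun α _ => ?_
          rw [Finset.sum_comm]
          rw [Finset.mul_sum]
          refine Finset.sum_congr rfl fun j _ => ?_
          rw [Finset.sum_ite_eq]
          simp only [Finset.mem_univ, if_true]
          ring

lemma FF_bound (n q : ℕ)
    (Dv : EuclideanSpace ℝ (Fin n) → Fin q → (EuclideanSpace ℝ (Fin n) →L[ℝ] ℝ))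
    (φ : EuclideanSpace ℝ (Fin n) → Fin n → ℝ)
    (x : EuclideanSpace ℝ (Fin n)) (M2 CD : ℝ) (hM2 : 0 ≤ M2) (hCD : 0 ≤ CD)
    (hA : ∀ α i j, |AA n q Dv x α i j| ≤ M2)
    (hD : ∀ (j : Fin n), ‖fderiv ℝ (fun y => φ y j) x‖ ≤ CD) :
    |FF n q Dv φ x| ≤ (q : ℝ) * ((n : ℝ) * ((n : ℝ) * (M2 * CD))) := by
  have hterm : ∀ α i j, |AA n q Dv x α i j * fderiv ℝ (fun y => φ y j) x (ee n i)| ≤ M2 * CD := by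
    intro α i j
    rw [abs_mul]
    apply mul_le_mul (hA α i j) ?_ (abs_nonneg _) hM2
    calc |fderiv ℝ (fun y => φ y j) x (ee n i)|
        ≤ ‖fderiv ℝ (fun y => φ y j) x‖ * ‖ee n i‖ :=
          (fderiv ℝ (fun y => φ y j) x).le_opNorm _
      _ ≤ CD * 1 := by
          apply mul_le_mul (hD j) ?_ (norm_nonneg _) hCD
          simp [ee, EuclideanSpace.norm_single]
      _ = CD := mul_one _
  unfold FF
  apply sum_bound
  intro α
  apply sum_bound
  intro i
  apply sum_bound
  intro j
  exact hterm α i j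

lemma FF_integrable (n q : ℕ)
    (Dv : EuclideanSpace ℝ (Fin n) → Fin q → (EuclideanSpace ℝ (Fin n) →L[ℝ] ℝ))
    (Ω : Set (EuclideanSpace ℝ (Fin n))) (hΩ_open : IsOpen Ω) (hball : Ω ⊆ ball 0 1)
    (hDv_cont : ContinuousOn Dv (closure Ω))
    (φ : EuclideanSpace ℝ (Fin n) → Fin n → ℝ)
    (hφ : ContDiff ℝ 1 φ) (hφc : HasCompactSupport φ) :
    IntegrableOn (FF n q Dv φ) Ω := by
  have hK : IsCompact (closure Ω) := (isBounded_ball.subset hball).isCompact_closure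
  obtain ⟨M1, M2, hM1n, hM2n, hM1, hM2, _⟩ := exists_AA_bound n q Dv (closure Ω) hK hDv_cont
  obtain ⟨CD, hCDn, hCD⟩ := exists_fderiv_bound n n φ hφ hφc
  have hbd : ∀ x ∈ Ω, |FF n q Dv φ x| ≤ (q : ℝ) * ((n : ℝ) * ((n : ℝ) * (M2 * CD))) :=
    fun x hx => FF_bound n q Dv φ x M2 CD hM2n hCDn
      (fun α i j => hM2 x (subset_closure hx) α i j) (fun j => hCD j x)
  have hcont : ContinuousOn (FF n q Dv φ) Ω := by
    unfold FF
    apply continuousOn_finset_sum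
    intro α _
    apply continuousOn_finset_sum
    intro i _
    apply continuousOn_finset_sum
    intro j _
    apply ContinuousOn.mul
    · unfold AA
      apply ContinuousOn.sub
      · apply ContinuousOn.mul ?_ continuousOn_const
        apply continuousOn_finset_sum
        intro β _
        apply continuousOn_finset_sum
        intro l _
        exact (((ContinuousLinearMap.apply ℝ ℝ (ee n l)).continuous.comp_continuousOn
          ((continuous_apply β).comp_continuousOn (hDv_cont.mono subset_closure)))).pow 2
      · apply ContinuousOn.mul
        · apply ContinuousOn.mul continuousOn_const
          exact ((ContinuousLinearMap.apply ℝ ℝ (ee n i)).continuous.comp_continuousOn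
            ((continuous_apply α).comp_continuousOn (hDv_cont.mono subset_closure)))
        · exact ((ContinuousLinearMap.apply ℝ ℝ (ee n j)).continuous.comp_continuousOn
            ((continuous_apply α).comp_continuousOn (hDv_cont.mono subset_closure)))
    · exact ((ContinuousLinearMap.apply ℝ ℝ (ee n i)).continuous.comp
        ((contDiff_pi.mp hφ j).continuous_fderiv one_ne_zero)).continuousOn
  have hfin : volume Ω < ⊤ :=
    lt_of_le_of_lt (measure_mono hball) measure_ball_lt_top
  have hmeas : AEStronglyMeasurable (FF n q Dv φ) (volume.restrict Ω) :=
    hcont.aestronglyMeasurable hΩ_open.measurableSet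
  haveI : IsFiniteMeasure (volume.restrict Ω) :=
    ⟨by rwa [Measure.restrict_apply_univ]⟩
  refine Integrable.mono' (integrable_const ((q : ℝ) * ((n : ℝ) * ((n : ℝ) * (M2 * CD)))))
    hmeas ?_
  exact (ae_restrict_iff' hΩ_open.measurableSet).mpr (Filter.Eventually.of_forall
    (fun x hx => by simpa [Real.norm_eq_abs] using hbd x hx))

lemma integral_bound_strip {n : ℕ} (Ω U : Set (EuclideanSpace ℝ (Fin n)))
    (hΩ : MeasurableSet Ω) (hU : MeasurableSet U)
    (G : EuclideanSpace ℝ (Fin n) → ℝ) (hGint : IntegrableOn G Ω)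
    (hzero : ∀ x ∈ Ω \ U, G x = 0) (C : ℝ)
    (hfin : volume (Ω ∩ U) < ⊤)
    (hbd : ∀ x ∈ Ω ∩ U, ‖G x‖ ≤ C) :
    |∫ x in Ω, G x| ≤ C * (volume (Ω ∩ U)).toReal := by
  have hsplit : ∫ x in Ω, G x = ∫ x in Ω ∩ U, G x := by
    rw [← Set.inter_union_diff Ω U, setIntegral_union]
    · rw [setIntegral_eq_zero_of_forall_eq_zero hzero, add_zero]
      rw [Set.inter_union_diff]
    · exact disjoint_sdiff_self_right.mono_left inter_subset_right
    · exact hΩ.diff hU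
    · exact hGint.mono_set inter_subset_left
    · exact hGint.mono_set diff_subset
  rw [hsplit, ← Real.norm_eq_abs]
  exact norm_setIntegral_le_of_norm_le_const hfin hbd

/-- Boundary squeeze identity: if `v : closure Ω → ℝ^q` is C¹ up to the boundary
(`Ω ⊆ H ∩ B₁` open, `H = {x¹ > 0}`), vanishes together with its tangential derivatives on
`closure Ω ∩ ∂H`, and satisfies the squeeze identity for all C¹ test vector fields whose
support meets `closure Ω` in a compact subset of `Ω`, then the squeeze identity holds for
all compactly supported C¹ vector fields supported in `B₁`, whose support meets
`closure Ω` only inside `Ω ∪ ∂H` and whose normal component vanishes on `∂H`. -/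
theorem boundary_squeeze_identity
    (n q : ℕ) (hn : 2 ≤ n) (hq : 1 ≤ q)
    (Ω : Set (EuclideanSpace ℝ (Fin n)))
    (hΩ_open : IsOpen Ω)
    (hΩ_sub : Ω ⊆ {x : EuclideanSpace ℝ (Fin n) | 0 < x ⟨0, by omega⟩} ∩ ball 0 1)
    (v : EuclideanSpace ℝ (Fin n) → Fin q → ℝ)
    (Dv : EuclideanSpace ℝ (Fin n) → Fin q → (EuclideanSpace ℝ (Fin n) →L[ℝ] ℝ))
    (hv_cont : ContinuousOn v (closure Ω))
    (hv_deriv : ∀ x ∈ interior (closure Ω), ∀ α, HasFDerivAt (fun y => v y α) (Dv x α) x)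
    (hDv_cont : ContinuousOn Dv (closure Ω))
    (hv_bdry : ∀ x ∈ closure Ω, x ⟨0, by omega⟩ = 0 → v x = 0)
    (hDv_bdry : ∀ x ∈ closure Ω, x ⟨0, by omega⟩ = 0 → ∀ α, ∀ j : Fin n, j ≠ ⟨0, by omega⟩ →
      Dv x α (EuclideanSpace.single j (1 : ℝ)) = 0)
    (h_squeeze_int : ∀ ψ : EuclideanSpace ℝ (Fin n) → Fin n → ℝ, ContDiff ℝ 1 ψ →
      IsCompact (tsupport ψ ∩ closure Ω) → tsupport ψ ∩ closure Ω ⊆ Ω →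
      ∫ x in Ω, ∑ α, ∑ i, ∑ j,
          ((∑ β, ∑ l, (Dv x β (EuclideanSpace.single l (1 : ℝ))) ^ 2) *
              (if i = j then (1 : ℝ) else 0)
            - 2 * Dv x α (EuclideanSpace.single i (1 : ℝ))
                * Dv x α (EuclideanSpace.single j (1 : ℝ)))
          * fderiv ℝ (fun y => ψ y j) x (EuclideanSpace.single i (1 : ℝ)) = 0) :
    ∀ ψ : EuclideanSpace ℝ (Fin n) → Fin n → ℝ, ContDiff ℝ 1 ψ → HasCompactSupport ψ →
      tsupport ψ ⊆ ball 0 1 →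
      tsupport ψ ∩ closure Ω ⊆ Ω ∪ {x : EuclideanSpace ℝ (Fin n) | x ⟨0, by omega⟩ = 0} →
      (∀ x : EuclideanSpace ℝ (Fin n), x ⟨0, by omega⟩ = 0 → ψ x ⟨0, by omega⟩ = 0) →
      ∫ x in Ω, ∑ α, ∑ i, ∑ j,
          ((∑ β, ∑ l, (Dv x β (EuclideanSpace.single l (1 : ℝ))) ^ 2) *
              (if i = j then (1 : ℝ) else 0)
            - 2 * Dv x α (EuclideanSpace.single i (1 : ℝ))
                * Dv x α (EuclideanSpace.single j (1 : ℝ)))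
          * fderiv ℝ (fun y => ψ y j) x (EuclideanSpace.single i (1 : ℝ)) = 0 := by
  intro ψ hψC hψc hψball hψcap hψ0
  classical
  have hn0 : 0 < n := by omega
  set i0 : Fin n := ⟨0, hn0⟩ with hi0
  show ∫ x in Ω, FF n q Dv ψ x = 0
  -- basic facts about Ω
  have hΩball : Ω ⊆ ball 0 1 := fun x hx => (hΩ_sub hx).2
  have hΩpos : ∀ x ∈ Ω, 0 < x i0 := fun x hx => (hΩ_sub hx).1
  have hproj_cont : Continuous (fun x : EuclideanSpace ℝ (Fin n) => x i0) :=
    (EuclideanSpace.proj (𝕜 := ℝ) i0).continuous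
  have hKcpt : IsCompact (closure Ω) := (isBounded_ball.subset hΩball).isCompact_closure
  have hKpos : ∀ x ∈ closure Ω, 0 ≤ x i0 := by
    have h1 : closure Ω ⊆ {x : EuclideanSpace ℝ (Fin n) | 0 ≤ x i0} :=
      closure_minimal (fun x hx => (hΩpos x hx).le)
        (isClosed_le continuous_const hproj_cont)
    exact fun x hx => h1 hx
  -- bounds
  obtain ⟨M1, M2, hM1n, hM2n, hM1, hM2, _⟩ :=
    exists_AA_bound n q Dv (closure Ω) hKcpt hDv_cont
  obtain ⟨MD, hMDn, hMD⟩ := exists_fderiv_bound n n ψ hψC hψc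
  obtain ⟨Mψ, hMψn, hMψ⟩ := exists_val_bound n n ψ hψC hψc
  obtain ⟨Cd, hCdn, hCd⟩ := st_deriv_bound
  -- Lipschitz-type bound on first component of ψ
  have hψlin : ∀ x : EuclideanSpace ℝ (Fin n), 0 ≤ x i0 → |ψ x i0| ≤ MD * x i0 := by
    intro x hx
    set x' : EuclideanSpace ℝ (Fin n) := x - EuclideanSpace.single i0 (x i0) with hx'
    have hx'0 : x' i0 = 0 := by simp [hx', EuclideanSpace.single_apply]
    have hψx' : ψ x' i0 = 0 := hψ0 x' hx'0
    have hlip : ‖ψ x i0 - ψ x' i0‖ ≤ MD * ‖x - x'‖ := by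
      apply convex_univ.norm_image_sub_le_of_norm_fderiv_le
        (f := fun y => ψ y i0)
        (fun z _ => ((contDiff_pi.mp hψC i0).differentiable one_ne_zero z))
        (fun z _ => hMD i0 z) (mem_univ x') (mem_univ x)
    have hnorm : ‖x - x'‖ = |x i0| := by
      simp [hx', EuclideanSpace.norm_single]
    rw [hψx', sub_zero, Real.norm_eq_abs, hnorm, abs_of_nonneg hx] at hlip
    exact hlip
  -- tangential derivative uniform smallness
  have htang : ∀ δ : ℝ, 0 < δ → ∃ t > 0, ∀ x ∈ closure Ω, x i0 ≤ t → ∀ α, ∀ j, j ≠ i0 →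
      |Dv x α (ee n j)| ≤ δ := by
    intro δ hδ
    apply exists_tangential_bound n q i0 Dv (closure Ω) hKcpt isClosed_closure hDv_cont
      hKpos ?_ δ hδ
    intro x hx hx0 α j hj
    exact hDv_bdry x hx hx0 α j hj
  -- integrability of FF ψ
  have hintψ : IntegrableOn (FF n q Dv ψ) Ω :=
    FF_integrable n q Dv Ω hΩ_open hΩball hDv_cont ψ hψC hψc
  -- constants
  set R : ℝ := 2 ^ (n - 1) with hR
  have hRpos : (0:ℝ) < R := by positivity
  set B1 : ℝ := (q : ℝ) * ((n : ℝ) * ((n : ℝ) * (M2 * MD))) with hB1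
  have hB1n : 0 ≤ B1 := by positivity
  set P0 : ℝ := 3 * R * (B1 + Cd * ((q : ℝ) * (M2 * (MD * 2)))) + 1 with hP0def
  set Q0 : ℝ := 3 * R * Cd * ((q : ℝ) * ((n : ℝ) * (2 * (M1 * Mψ)))) + 1 with hQ0def
  have hP0 : 0 < P0 := by positivity
  have hQ0 : 0 < Q0 := by positivity
  -- the key estimate
  have key : ∀ δ' : ℝ, 0 < δ' → |∫ x in Ω, FF n q Dv ψ x| ≤ δ' := by
    intro δ' hδ'
    set δ : ℝ := δ' / (2 * Q0) with hδdef
    have hδpos : 0 < δ := by positivity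
    obtain ⟨t, ht, htan⟩ := htang δ hδpos
    set ε : ℝ := min (t / 2) (δ' / (2 * P0)) with hεdef
    have hεpos : 0 < ε := lt_min (by linarith) (by positivity)
    have hεt : 2 * ε ≤ t := by
      have := min_le_left (t / 2) (δ' / (2 * P0))
      have h2 : ε ≤ t / 2 := this
      linarith
    have hεP : ε ≤ δ' / (2 * P0) := min_le_right _ _
    -- the cutoff function
    set γ : ℝ → ℝ := fun s => Real.smoothTransition (s / ε - 1) with hγdef
    set γ' : ℝ → ℝ := fun s => deriv Real.smoothTransition (s / ε - 1) * (1 / ε) with hγ'def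
    have hγd : ∀ s, HasDerivAt γ (γ' s) s := by
      intro s
      have h1 : HasDerivAt (fun u : ℝ => u / ε - 1) (1 / ε) s := by
        simpa using ((hasDerivAt_id s).div_const ε).sub_const 1
      have h2 : HasDerivAt Real.smoothTransition
          (deriv Real.smoothTransition (s / ε - 1)) (s / ε - 1) :=
        (((Real.smoothTransition.contDiff (n := 1)).differentiable one_ne_zero) _).hasDerivAt
      exact h2.comp s h1
    have hγ0 : ∀ s : ℝ, s ≤ ε → γ s = 0 := by
      intro s hs
      apply Real.smoothTransition.zero_of_nonpos
      have : s / ε ≤ 1 := by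
        rw [div_le_one hεpos]; linarith
      linarith
    have hγ1 : ∀ s : ℝ, 2 * ε ≤ s → γ s = 1 := by
      intro s hs
      apply Real.smoothTransition.one_of_one_le
      have : 2 ≤ s / ε := by
        rw [le_div_iff₀ hεpos]; linarith
      linarith
    have hγ'1 : ∀ s : ℝ, 2 * ε < s → γ' s = 0 := by
      intro s hs
      have harg : 1 < s / ε - 1 := by
        have : 2 < s / ε := by
          rw [lt_div_iff₀ hεpos]; linarith
        linarith
      have := st_deriv_zero (s / ε - 1) (fun hmem => by
        have := hmem.2; linarith)
      simp only [hγ'def, this, zero_mul]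
    have hγmem : ∀ s, 0 ≤ γ s ∧ γ s ≤ 1 :=
      fun s => ⟨Real.smoothTransition.nonneg _, Real.smoothTransition.le_one _⟩
    have hγ'b : ∀ s, |γ' s| ≤ Cd * (1 / ε) := by
      intro s
      rw [hγ'def]
      simp only
      rw [abs_mul]
      apply mul_le_mul (hCd _) (le_of_eq (abs_of_nonneg (by positivity))) (abs_nonneg _) hCdn
    -- the truncated test field
    set ψε : EuclideanSpace ℝ (Fin n) → Fin n → ℝ := fun y j => γ (y i0) * ψ y j with hψεdef
    have hψεC : ContDiff ℝ 1 ψε := by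
      apply contDiff_pi.mpr
      intro j
      refine ContDiff.mul ?_ (contDiff_pi.mp hψC j)
      refine (Real.smoothTransition.contDiff (n := 1)).comp ?_
      exact ((EuclideanSpace.proj (𝕜 := ℝ) i0).contDiff.div_const ε).sub contDiff_const
    have hψεsupp : tsupport ψε ⊆ tsupport ψ ∩ {x : EuclideanSpace ℝ (Fin n) | ε ≤ x i0} := by
      apply closure_minimal ?_ ((isClosed_tsupport ψ).inter
        (isClosed_le continuous_const hproj_cont))
      intro x hx
      simp only [Function.mem_support] at hx
      obtain ⟨j, hj⟩ := Function.ne_iff.mp hx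
      simp only [hψεdef] at hj
      have hγne : γ (x i0) ≠ 0 := fun h => hj (by simp [h])
      have hψne : ψ x j ≠ 0 := fun h => hj (by simp [h])
      constructor
      · apply subset_closure
        simp only [Function.mem_support]
        exact fun h => hψne (by simp [h])
      · simp only [Set.mem_setOf_eq]
        by_contra hcon
        exact hγne (hγ0 _ (le_of_not_ge hcon))
    have hψεcs : HasCompactSupport ψε :=
      IsCompact.of_isClosed_subset hψc (isClosed_tsupport ψε)
        (fun x hx => (hψεsupp hx).1)
    -- interior squeeze identity applies
    have hI0 : ∫ x in Ω, FF n q Dv ψε x = 0 := by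
      apply h_squeeze_int ψε hψεC
      · apply IsCompact.of_isClosed_subset hψc
          ((isClosed_tsupport ψε).inter isClosed_closure)
        exact fun x hx => (hψεsupp hx.1).1
      · intro x hx
        have h1 := hψεsupp hx.1
        have h2 : x ∈ Ω ∪ {x : EuclideanSpace ℝ (Fin n) | x i0 = 0} :=
          hψcap ⟨h1.1, hx.2⟩
        rcases h2 with h2 | h2
        · exact h2
        · exfalso
          have h3 : ε ≤ x i0 := h1.2
          have h4 : x i0 = 0 := h2
          rw [h4] at h3
          linarith
    have hintε : IntegrableOn (FF n q Dv ψε) Ω :=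
      FF_integrable n q Dv Ω hΩ_open hΩball hDv_cont ψε hψεC hψεcs
    -- the difference function and its bound
    set G : EuclideanSpace ℝ (Fin n) → ℝ := fun x => FF n q Dv ψ x - FF n q Dv ψε x with hGdef
    have hgid : ∀ x, G x = (1 - γ (x i0)) * FF n q Dv ψ x
        - γ' (x i0) * ∑ α, ∑ j, AA n q Dv x α i0 j * ψ x j := by
      intro x
      have := FF_cutoff n q Dv ψ hψC i0 γ γ' hγd x
      simp only [hGdef]
      have hψεeq : FF n q Dv ψε x = FF n q Dv (fun y j => γ (y i0) * ψ y j) x := rfl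
      rw [hψεeq, this]
      ring
    set U : Set (EuclideanSpace ℝ (Fin n)) := {x | x i0 ≤ 2 * ε} with hUdef
    have hUmeas : MeasurableSet U :=
      (isClosed_le hproj_cont continuous_const).measurableSet
    have hGzero : ∀ x ∈ Ω \ U, G x = 0 := by
      intro x hx
      have hxg : 2 * ε < x i0 := lt_of_not_ge hx.2
      rw [hgid x, hγ1 _ hxg.le, hγ'1 _ hxg]
      ring
    -- pointwise bound on the strip
    set W : ℝ := (q : ℝ) * (M2 * (MD * (2 * ε)) + (n : ℝ) * ((2 * (M1 * δ)) * Mψ)) with hWdef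
    have hWn : 0 ≤ W := by positivity
    set Bpt : ℝ := B1 + Cd * (1 / ε) * W with hBptdef
    have hGbd : ∀ x ∈ Ω ∩ U, ‖G x‖ ≤ Bpt := by
      intro x hx
      have hxΩ := hx.1
      have hxcl : x ∈ closure Ω := subset_closure hxΩ
      have hxU : x i0 ≤ 2 * ε := hx.2
      have hx0 : 0 < x i0 := hΩpos x hxΩ
      -- bound on FF ψ x
      have hF : |FF n q Dv ψ x| ≤ B1 :=
        FF_bound n q Dv ψ x M2 MD hM2n hMDn (fun α i j => hM2 x hxcl α i j)
          (fun j => hMD j x)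
      -- bound on the boundary sum
      have hWsum : |∑ α, ∑ j, AA n q Dv x α i0 j * ψ x j| ≤ W := by
        rw [hWdef]
        apply sum_bound
        intro α
        have hsplit : ∑ j, AA n q Dv x α i0 j * ψ x j
            = AA n q Dv x α i0 i0 * ψ x i0
              + ∑ j ∈ Finset.univ.erase i0, AA n q Dv x α i0 j * ψ x j :=
          (Finset.add_sum_erase Finset.univ _ (Finset.mem_univ i0)).symm
        rw [hsplit]
        have h1 : |AA n q Dv x α i0 i0 * ψ x i0| ≤ M2 * (MD * (2 * ε)) := by
          rw [abs_mul]
          apply mul_le_mul (hM2 x hxcl α i0 i0) ?_ (abs_nonneg _) hM2n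
          calc |ψ x i0| ≤ MD * x i0 := hψlin x hx0.le
            _ ≤ MD * (2 * ε) := mul_le_mul_of_nonneg_left hxU hMDn
        have h2 : ∀ j ∈ Finset.univ.erase i0,
            |AA n q Dv x α i0 j * ψ x j| ≤ (2 * (M1 * δ)) * Mψ := by
          intro j hj
          have hjne : j ≠ i0 := Finset.ne_of_mem_erase hj
          have hAAval : AA n q Dv x α i0 j = - (2 * Dv x α (ee n i0) * Dv x α (ee n j)) := by
            unfold AA
            have hne' : ¬ i0 = j := fun h => hjne h.symm
            rw [if_neg hne']
            ring
          rw [abs_mul, hAAval, abs_neg]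
          apply mul_le_mul ?_ (hMψ x j) (abs_nonneg _) (by positivity)
          rw [abs_mul, abs_mul, abs_two]
          have htg : |Dv x α (ee n j)| ≤ δ := htan x hxcl (le_trans hxU hεt) α j hjne
          have hb := hM1 x hxcl α i0
          nlinarith [abs_nonneg (Dv x α (ee n i0)), abs_nonneg (Dv x α (ee n j)),
            abs_nonneg (ψ x j), htg, hδpos.le]
        calc |AA n q Dv x α i0 i0 * ψ x i0
              + ∑ j ∈ Finset.univ.erase i0, AA n q Dv x α i0 j * ψ x j|
            ≤ |AA n q Dv x α i0 i0 * ψ x i0|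
              + |∑ j ∈ Finset.univ.erase i0, AA n q Dv x α i0 j * ψ x j| := abs_add_le _ _
          _ ≤ M2 * (MD * (2 * ε)) + (n : ℝ) * ((2 * (M1 * δ)) * Mψ) := by
              apply add_le_add h1
              calc |∑ j ∈ Finset.univ.erase i0, AA n q Dv x α i0 j * ψ x j|
                  ≤ ∑ j ∈ Finset.univ.erase i0, |AA n q Dv x α i0 j * ψ x j| :=
                    Finset.abs_sum_le_sum_abs _ _
                _ ≤ ∑ _j ∈ Finset.univ.erase i0, ((2 * (M1 * δ)) * Mψ) :=
                    Finset.sum_le_sum h2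
                _ = ((Finset.univ.erase i0).card : ℝ) * ((2 * (M1 * δ)) * Mψ) := by
                    rw [Finset.sum_const, nsmul_eq_mul]
                _ ≤ (n : ℝ) * ((2 * (M1 * δ)) * Mψ) := by
                    apply mul_le_mul_of_nonneg_right ?_ (by positivity)
                    have : (Finset.univ.erase i0).card ≤ n := by
                      calc (Finset.univ.erase i0).card ≤ (Finset.univ : Finset (Fin n)).card :=
                        Finset.card_le_card (Finset.erase_subset _ _)
                        _ = n := by simp
                    exact_mod_cast this
      -- combine
      rw [Real.norm_eq_abs, hgid x]
      calc |(1 - γ (x i0)) * FF n q Dv ψ x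
            - γ' (x i0) * ∑ α, ∑ j, AA n q Dv x α i0 j * ψ x j|
          ≤ |(1 - γ (x i0)) * FF n q Dv ψ x|
            + |γ' (x i0) * ∑ α, ∑ j, AA n q Dv x α i0 j * ψ x j| := abs_sub _ _
        _ ≤ 1 * B1 + Cd * (1 / ε) * W := by
            apply add_le_add
            · rw [abs_mul]
              apply mul_le_mul ?_ hF (abs_nonneg _) (by norm_num)
              rw [abs_of_nonneg (by linarith [(hγmem (x i0)).2])]
              linarith [(hγmem (x i0)).1]
            · rw [abs_mul]
              exact mul_le_mul (hγ'b _) hWsum (abs_nonneg _) (by positivity)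
        _ = Bpt := by rw [hBptdef]; ring
    -- the strip has small volume
    have hstrip : Ω ∩ U ⊆ {x : EuclideanSpace ℝ (Fin n) | ∀ j, x j ∈ Set.Ioo
        (if j = i0 then 0 else -1) (if j = i0 then 3 * ε else 1)} := by
      intro x hx j
      have hxb : x ∈ ball 0 1 := hΩball hx.1
      have hxn : ‖x‖ < 1 := by simpa [mem_ball, dist_eq_norm] using hxb
      have hco := lt_of_le_of_lt (coord_le_norm x j) hxn
      have hco' := abs_lt.mp hco
      by_cases hj : j = i0
      · rw [hj]
        simp only [Set.mem_Ioo, eq_self_iff_true, if_true]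
        have h2 : x i0 ≤ 2 * ε := hx.2
        exact ⟨hΩpos x hx.1, by linarith⟩
      · simp only [Set.mem_Ioo, if_neg hj]
        exact ⟨hco'.1, hco'.2⟩
    have hvol : (volume (Ω ∩ U)).toReal ≤ 3 * ε * R := by
      have hle : volume (Ω ∩ U) ≤ ENNReal.ofReal (3 * ε) * ENNReal.ofReal 2 ^ (n - 1) := by
        calc volume (Ω ∩ U) ≤ volume {x : EuclideanSpace ℝ (Fin n) | ∀ j, x j ∈ Set.Ioo
              (if j = i0 then 0 else -1) (if j = i0 then 3 * ε else 1)} :=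
            measure_mono hstrip
          _ = ∏ j, ENNReal.ofReal ((if j = i0 then 3 * ε else 1) - (if j = i0 then 0 else -1)) :=
            volume_box n _ _
          _ = ENNReal.ofReal (3 * ε) * ENNReal.ofReal 2 ^ (n - 1) := by
            rw [← Finset.mul_prod_erase Finset.univ _ (Finset.mem_univ i0)]
            congr 1
            · simp
            · rw [Finset.prod_congr rfl (g := fun _ => ENNReal.ofReal 2)
                (fun j hj => by simp [Finset.ne_of_mem_erase hj]; norm_num)]
              rw [Finset.prod_const, Finset.card_erase_of_mem (Finset.mem_univ i0)]
              simp
      have hfin2 : ENNReal.ofReal (3 * ε) * ENNReal.ofReal 2 ^ (n - 1) ≠ ⊤ := by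
        apply ENNReal.mul_ne_top ENNReal.ofReal_ne_top
        exact ENNReal.pow_ne_top ENNReal.ofReal_ne_top
      calc (volume (Ω ∩ U)).toReal
          ≤ (ENNReal.ofReal (3 * ε) * ENNReal.ofReal 2 ^ (n - 1)).toReal :=
            ENNReal.toReal_mono hfin2 hle
        _ = 3 * ε * R := by
            rw [ENNReal.toReal_mul, ENNReal.toReal_pow, ENNReal.toReal_ofReal (by positivity),
              ENNReal.toReal_ofReal (by norm_num)]
    have hfinΩU : volume (Ω ∩ U) < ⊤ :=
      lt_of_le_of_lt (measure_mono (fun x hx => hΩball hx.1)) measure_ball_lt_top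
    -- assemble the integral bound
    have hGint : IntegrableOn G Ω := hintψ.sub hintε
    have heq : ∫ x in Ω, FF n q Dv ψ x = ∫ x in Ω, G x := by
      rw [hGdef]
      rw [integral_sub hintψ hintε, hI0, sub_zero]
    rw [heq]
    have hmain := integral_bound_strip Ω U hΩ_open.measurableSet hUmeas G hGint hGzero
      Bpt hfinΩU hGbd
    have hBptn : 0 ≤ Bpt := by rw [hBptdef]; positivity
    have hfinal : Bpt * (volume (Ω ∩ U)).toReal ≤ Bpt * (3 * ε * R) :=
      mul_le_mul_of_nonneg_left hvol hBptn
    have harith : Bpt * (3 * ε * R) ≤ P0 * ε + Q0 * δ := by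
      have hεne : ε ≠ 0 := ne_of_gt hεpos
      have hexp : Bpt * (3 * ε * R)
          = (3 * R * (B1 + Cd * ((q : ℝ) * (M2 * (MD * 2))))) * ε
            + (3 * R * Cd * ((q : ℝ) * ((n : ℝ) * (2 * (M1 * Mψ))))) * δ := by
        rw [hBptdef, hWdef]
        field_simp
        ring
      rw [hexp, hP0def, hQ0def]
      nlinarith [hεpos.le, hδpos.le]
    have hchoice : P0 * ε + Q0 * δ ≤ δ' := by
      have h1 : P0 * ε ≤ P0 * (δ' / (2 * P0)) := mul_le_mul_of_nonneg_left hεP hP0.le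
      have h2 : P0 * (δ' / (2 * P0)) = δ' / 2 := by
        field_simp
      have h3 : Q0 * δ = δ' / 2 := by
        rw [hδdef]
        field_simp
      have h4 : P0 * ε ≤ δ' / 2 := h2 ▸ h1
      have h5 : Q0 * δ ≤ δ' / 2 := le_of_eq h3
      have h6 : δ' / 2 + δ' / 2 = δ' := by ring
      exact le_trans (add_le_add h4 h5) (le_of_eq h6)
    calc |∫ x in Ω, G x| ≤ Bpt * (volume (Ω ∩ U)).toReal := hmain
      _ ≤ Bpt * (3 * ε * R) := hfinal
      _ ≤ P0 * ε + Q0 * δ := harith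
      _ ≤ δ' := hchoice
  -- conclude
  by_contra hne
  have h1 : 0 < |∫ x in Ω, FF n q Dv ψ x| := abs_pos.mpr hne
  have h2 := key (|∫ x in Ω, FF n q Dv ψ x| / 2) (by linarith)
  linarith
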